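/- For the limit polynomial h(I₁,I₂,I₃) = (3/2)(I₁⁴+I₂⁴)/4! + I₃, there exist no linearly independent vectors u, v ∈ ℝ³ and real numbers α, β satisfying the system: h¹[u] = h¹[v] = 0, h²[v,u] = h²[v,v] = 0, h³[v,v,v] = 0, 2α h²[u,u] + h³[v,v,u] = 0, 6α h³[u,v,v] + h⁴[v,v,v,v] = 0, 6β h²[u,u] + 6α h³[u,u,v] + h⁴[v,v,v,u] = 0 (at the origin). In particular the 5-jet of h at 0 does not belong to Ψ₂(3), so Ψ₂(3) is not closed in the space of 5-jets. -/

import Mathlib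

/-- The limit polynomial `h(I) = (3/2)(I₁⁴+I₂⁴)/4! + I₃`. -/
noncomputable def h : (Fin 3 → ℝ) → ℝ :=
  fun I => (3 / 2) * ((I 0) ^ 4 + (I 1) ^ 4) / 24 + I 2

/-!
At the origin the only nonzero derivatives of `h` are `h¹[y] = y₂` and
`h⁴[y, y, y, y] = (3/2)(y₀⁴ + y₁⁴)`; in particular `h³ = 0`. So `h¹[v] = 0` forces `v₂ = 0`, and
then `6α h³[u,v,v] + h⁴[v,v,v,v] = 0` reads `v₀⁴ + v₁⁴ = 0`, i.e. `v = 0`, which is impossible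
for a member of a linearly independent family.
-/

open scoped Nat

section CoordinateFunctions

variable {𝕜 : Type*} [NontriviallyNormedField 𝕜] {ι : Type*} [Fintype ι]
  {F : Type*} [NormedAddCommGroup F] [NormedSpace 𝕜 F]

theorem iteratedFDeriv_comp_eval_apply {n : ℕ} {f : 𝕜 → F} (hf : ContDiff 𝕜 n f)
    (j : ι) (x : ι → 𝕜) (m : Fin n → ι → 𝕜) :
    iteratedFDeriv 𝕜 n (fun y => f (y j)) x m = (∏ i, m i j) • iteratedDeriv n f (x j) := by
  have hcomp : (fun y : ι → 𝕜 => f (y j)) = f ∘ ContinuousLinearMap.proj (R := 𝕜) j := rfl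
  rw [hcomp, ContinuousLinearMap.iteratedFDeriv_comp_right _ hf x le_rfl]
  simp [iteratedFDeriv_apply_eq_iteratedDeriv_mul_prod]

theorem iteratedFDeriv_eval_pow_zero_apply (n k : ℕ) (j : ι) (m : Fin n → ι → 𝕜) :
    iteratedFDeriv 𝕜 n (fun y : ι → 𝕜 => y j ^ k) 0 m =
      if n = k then k ! * ∏ i, m i j else 0 := by
  rw [iteratedFDeriv_comp_eval_apply (f := (· ^ k)) (by fun_prop), Pi.zero_apply,
    iteratedDeriv_fun_pow_zero]
  split_ifs <;> simp [mul_comm]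

end CoordinateFunctions

theorem iteratedFDeriv_h_zero_apply (n : ℕ) (m : Fin n → Fin 3 → ℝ) :
    iteratedFDeriv ℝ n h 0 m =
      (if n = 4 then 3 / 2 * ((∏ i, m i 0) + ∏ i, m i 1) else 0) +
        if n = 1 then ∏ i, m i 2 else 0 := by
  have hsplit : h = fun y => (1 / 16 : ℝ) • y 0 ^ 4 + (1 / 16 : ℝ) • y 1 ^ 4 + y 2 ^ 1 := by
    ext y; simp only [h, smul_eq_mul]; ring
  rw [hsplit, fun_iteratedFDeriv_add_apply (by fun_prop) (by fun_prop),
    fun_iteratedFDeriv_add_apply (by fun_prop) (by fun_prop),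
    iteratedFDeriv_const_smul_apply' (by fun_prop), iteratedFDeriv_const_smul_apply' (by fun_prop)]
  simp only [add_apply, smul_apply, iteratedFDeriv_eval_pow_zero_apply]
  split_ifs <;> simp_all [Nat.factorial]; ring

theorem fderiv_h_zero (v : Fin 3 → ℝ) : fderiv ℝ h 0 v = v 2 := by
  simpa using (iteratedFDeriv_one_apply (f := h) (x := 0) ![v]).symm.trans
    (iteratedFDeriv_h_zero_apply 1 ![v])

theorem iteratedFDeriv_three_h_zero (m : Fin 3 → Fin 3 → ℝ) : iteratedFDeriv ℝ 3 h 0 m = 0 := by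
  simp [iteratedFDeriv_h_zero_apply]

theorem iteratedFDeriv_four_h_zero_diag (v : Fin 3 → ℝ) :
    iteratedFDeriv ℝ 4 h 0 ![v, v, v, v] = 3 / 2 * (v 0 ^ 4 + v 1 ^ 4) := by
  simp [iteratedFDeriv_h_zero_apply, Fin.prod_univ_four, pow_succ, mul_assoc]

/-- No linearly independent `u, v` and reals `α, β` solve the system defining `Ψ₂(3)`
for `h` at the origin: the 5-jet of `h` at `0` does not belong to `Ψ₂(3)`. -/
theorem limit_jet_not_mem_Psi2 :
    ¬ ∃ (u v : Fin 3 → ℝ) (α β : ℝ),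
      LinearIndependent ℝ ![u, v] ∧
      fderiv ℝ h 0 u = 0 ∧
      fderiv ℝ h 0 v = 0 ∧
      iteratedFDeriv ℝ 2 h 0 ![v, u] = 0 ∧
      iteratedFDeriv ℝ 2 h 0 ![v, v] = 0 ∧
      iteratedFDeriv ℝ 3 h 0 ![v, v, v] = 0 ∧
      2 * α * iteratedFDeriv ℝ 2 h 0 ![u, u] + iteratedFDeriv ℝ 3 h 0 ![v, v, u] = 0 ∧
      6 * α * iteratedFDeriv ℝ 3 h 0 ![u, v, v] + iteratedFDeriv ℝ 4 h 0 ![v, v, v, v] = 0 ∧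
      6 * β * iteratedFDeriv ℝ 2 h 0 ![u, u] + 6 * α * iteratedFDeriv ℝ 3 h 0 ![u, u, v]
        + iteratedFDeriv ℝ 4 h 0 ![v, v, v, u] = 0 := by
  rintro ⟨u, v, α, β, hli, -, hv, -, -, -, -, hquartic, -⟩
  rw [fderiv_h_zero] at hv
  rw [iteratedFDeriv_three_h_zero, iteratedFDeriv_four_h_zero_diag] at hquartic
  have hsum : v 0 ^ 4 + v 1 ^ 4 = 0 := by linarith
  have hv01 := (add_eq_zero_iff_of_nonneg (by positivity) (by positivity)).mp hsum
  have hv_zero : v = 0 := by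
    ext i
    fin_cases i
    · exact pow_eq_zero_iff (n := 4) (by norm_num) |>.mp hv01.1
    · exact pow_eq_zero_iff (n := 4) (by norm_num) |>.mp hv01.2
    · exact hv
  exact hli.ne_zero 1 (by simpa using hv_zero)
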